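/- If τ(i,j) ≤ 2π/3, then every point v_k with k ∈ ⟨i+1..j−1⟩ satisfies ∠ v_i v_k v_j ≥ π/3 (unsigned angle at v_k in the triangle v_i v_k v_j). -/

import Mathlib

noncomputable section

namespace BNC

/-- The Euclidean plane. -/
abbrev Pt : Type := EuclideanSpace ℝ (Fin 2)

/-- Planar cross product (determinant) of two vectors. -/
def cross (u w : Pt) : ℝ := u 0 * w 1 - u 1 * w 0

/-- `v` lists points in strictly convex position in counterclockwise order:
every point distinct from `v i` and `v (i+1)` lies strictly to the left of the
directed line from `v i` to `v (i+1)`.  (This also forces no three of the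
points to be collinear.) -/
def ConvexCCW {n : ℕ} (v : ZMod n → Pt) : Prop :=
  ∀ i j : ZMod n, j ≠ i → j ≠ i + 1 → 0 < cross (v (i + 1) - v i) (v j - v i)

/-- The cyclic arc of indices `i, i+1, …, j` (mod `n`). -/
def arc {n : ℕ} (i j : ZMod n) : Finset (ZMod n) :=
  Finset.image (fun t : ℕ => i + (t : ZMod n)) (Finset.range ((j - i).val + 1))

/-- The turning angle `τ(i,j)`: the sum over `k ∈ ⟨i+1..j−1⟩` of the unsigned
angle between `v (k+1) − v k` and `v k − v (k−1)`. -/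
def tau {n : ℕ} (v : ZMod n → Pt) (i j : ZMod n) : ℝ :=
  ∑ k ∈ arc (i + 1) (j - 1),
    InnerProductGeometry.angle (v (k + 1) - v k) (v k - v (k - 1))

/-- The length of the segment joining the two points of an unordered pair. -/
def pairDist {n : ℕ} (v : ZMod n → Pt) : Sym2 (ZMod n) → ℝ :=
  Sym2.lift ⟨fun a b => dist (v a) (v b), fun a b => dist_comm (v a) (v b)⟩

/-- The closed segment joining the two points of an unordered pair. -/
def pairSeg {n : ℕ} (v : ZMod n → Pt) : Sym2 (ZMod n) → Set Pt :=
  Sym2.lift ⟨fun a b => segment ℝ (v a) (v b), fun a b => segment_symm ℝ (v a) (v b)⟩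

/-- `M` is a perfect matching of the index set `A`: a set of non-degenerate
unordered pairs of indices from `A` such that every index of `A` belongs to
exactly one pair. -/
def IsMatchingOn {n : ℕ} (A : Set (ZMod n)) (M : Set (Sym2 (ZMod n))) : Prop :=
  (∀ e ∈ M, ¬ e.IsDiag) ∧ (∀ e ∈ M, ∀ k, k ∈ e → k ∈ A) ∧
    (∀ k ∈ A, ∃! e, e ∈ M ∧ k ∈ e)

/-- The closed segments of distinct pairs of `M` are pairwise disjoint. -/
def NonCrossing {n : ℕ} (v : ZMod n → Pt) (M : Set (Sym2 (ZMod n))) : Prop :=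
  ∀ e ∈ M, ∀ e' ∈ M, e ≠ e' → Disjoint (pairSeg v e) (pairSeg v e')

/-- The bottleneck value of a matching: the maximal segment length. -/
def bnM {n : ℕ} (v : ZMod n → Pt) (M : Set (Sym2 (ZMod n))) : ℝ :=
  sSup (pairDist v '' M)

/-- A non-crossing perfect matching of the whole point set. -/
def IsNCMatching {n : ℕ} (v : ZMod n → Pt) (M : Set (Sym2 (ZMod n))) : Prop :=
  IsMatchingOn Set.univ M ∧ NonCrossing v M

/-- A bottleneck matching: a non-crossing matching minimizing the bottleneck value. -/
def IsBottleneck {n : ℕ} (v : ZMod n → Pt) (M : Set (Sym2 (ZMod n))) : Prop :=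
  IsNCMatching v M ∧ ∀ M', IsNCMatching v M' → bnM v M ≤ bnM v M'

/-- A pair is an edge of the full polygon iff it is of the form `{k, k+1}`. -/
def IsPolyEdge {n : ℕ} (e : Sym2 (ZMod n)) : Prop := ∃ k : ZMod n, e = s(k, k + 1)

/-- The diagonals of a matching of the full point set. -/
def fullDiags {n : ℕ} (M : Set (Sym2 (ZMod n))) : Set (Sym2 (ZMod n)) :=
  {e ∈ M | ¬ IsPolyEdge e}

/-- The full polygon: the convex hull of all the points. -/
def fullPoly {n : ℕ} (v : ZMod n → Pt) : Set Pt := convexHull ℝ (Set.range v)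

/-- The interior of the polygon `Poly` minus the union of the segments of the
diagonals from `D`. -/
def regionSpace {n : ℕ} (v : ZMod n → Pt) (Poly : Set Pt) (D : Set (Sym2 (ZMod n))) :
    Set Pt :=
  interior Poly \ ⋃ e ∈ D, pairSeg v e

/-- `R` is a region: the closure of a connected component of the interior of the
polygon minus the union of the diagonal segments. -/
def IsRegion {n : ℕ} (v : ZMod n → Pt) (Poly : Set Pt) (D : Set (Sym2 (ZMod n)))
    (R : Set Pt) : Prop :=
  ∃ x ∈ regionSpace v Poly D, R = closure (connectedComponentIn (regionSpace v Poly D) x)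

/-- The diagonals from `D` whose segment lies on the boundary of `R`. -/
def boundDiags {n : ℕ} (v : ZMod n → Pt) (Poly : Set Pt) (D : Set (Sym2 (ZMod n)))
    (R : Set Pt) : Set (Sym2 (ZMod n)) :=
  {e ∈ D | pairSeg v e ⊆ frontier R}

/-- `R` is a region bounded by exactly `k` diagonals. -/
def KBounded {n : ℕ} (v : ZMod n → Pt) (Poly : Set Pt) (D : Set (Sym2 (ZMod n)))
    (R : Set Pt) (k : ℕ) : Prop :=
  IsRegion v Poly D R ∧ (boundDiags v Poly D R).ncard = k

/-- The graph whose vertices are the diagonals of `D`, two being adjacent iff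
some 2-bounded region has both on its boundary. -/
def cascadeGraph {n : ℕ} (v : ZMod n → Pt) (Poly : Set Pt) (D : Set (Sym2 (ZMod n))) :
    SimpleGraph D where
  Adj a b := a ≠ b ∧ ∃ R : Set Pt, KBounded v Poly D R 2 ∧
      pairSeg v a.1 ⊆ frontier R ∧ pairSeg v b.1 ⊆ frontier R
  symm := by
    constructor
    rintro a b ⟨hab, R, h1, h2, h3⟩
    exact ⟨hab.symm, R, h1, h3, h2⟩
  loopless := by constructor; rintro a ⟨h, -⟩; exact h rfl

/-- The number of cascades: the number of connected components of the cascade graph. -/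
def cascadeCount {n : ℕ} (v : ZMod n → Pt) (Poly : Set Pt) (D : Set (Sym2 (ZMod n))) : ℕ :=
  Nat.card (cascadeGraph v Poly D).ConnectedComponent

/-- A pair is a diagonal relative to the arc `⟨i..j⟩` iff it is neither `{i,j}`
nor of the form `{k, k+1}` with both `k` and `k+1` in the arc. -/
def ArcDiag {n : ℕ} (i j : ZMod n) (e : Sym2 (ZMod n)) : Prop :=
  e ≠ s(i, j) ∧ ∀ k : ZMod n, k ∈ arc i j → k + 1 ∈ arc i j → e ≠ s(k, k + 1)

/-- The convex hull of the points of the arc `⟨i..j⟩`. -/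
def arcPoly {n : ℕ} (v : ZMod n → Pt) (i j : ZMod n) : Set Pt :=
  convexHull ℝ (v '' (arc i j : Set (ZMod n)))

/-- The diagonals (relative to the arc `⟨i..j⟩`) of a matching `M`. -/
def arcDiags {n : ℕ} (i j : ZMod n) (M : Set (Sym2 (ZMod n))) : Set (Sym2 (ZMod n)) :=
  {e ∈ M | ArcDiag i j e}

/-- `M` is admissible for the subproblem `Matching(i,j)`: it is a non-crossing
perfect matching of the points of the arc `⟨i..j⟩`, it has at most one cascade,
and any region whose boundary contains the segment `[v i, v j]` has at most one
diagonal of `M` on its boundary. -/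
def Admissible {n : ℕ} (v : ZMod n → Pt) (i j : ZMod n) (M : Set (Sym2 (ZMod n))) : Prop :=
  IsMatchingOn (↑(arc i j)) M ∧ NonCrossing v M ∧
    cascadeCount v (arcPoly v i j) (arcDiags i j M) ≤ 1 ∧
    ∀ R : Set Pt, IsRegion v (arcPoly v i j) (arcDiags i j M) R →
      segment ℝ (v i) (v j) ⊆ frontier R →
      (boundDiags v (arcPoly v i j) (arcDiags i j M) R).ncard ≤ 1

/-- `S i j`: the optimal value of the subproblem `Matching(i,j)`. -/
def S {n : ℕ} (v : ZMod n → Pt) (i j : ZMod n) : ℝ :=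
  sInf (bnM v '' {M | Admissible v i j M})

/-- The pair `(i,j)` is necessary: every admissible matching attaining `S i j`
contains the pair `{i,j}`. -/
def Necessary {n : ℕ} (v : ZMod n → Pt) (i j : ZMod n) : Prop :=
  ∀ M : Set (Sym2 (ZMod n)), Admissible v i j M → bnM v M = S v i j → s(i, j) ∈ M

/-- The closed right side of the directed line from `v i` to `v j`. -/
def rightClosed {n : ℕ} (v : ZMod n → Pt) (i j : ZMod n) : Set Pt :=
  {P : Pt | cross (v j - v i) (P - v i) ≤ 0}

/-- The region `Π⁺(i,j)`. -/
def PiPlus {n : ℕ} (v : ZMod n → Pt) (i j : ZMod n) : Set Pt :=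
  {P ∈ rightClosed v i j |
    Real.pi / 3 ≤ EuclideanGeometry.angle (v i) P (v j) ∧ dist (v i) (v j) ≤ dist P (v i)}

/-- The region `Π⁻(i,j)`. -/
def PiMinus {n : ℕ} (v : ZMod n → Pt) (i j : ZMod n) : Set Pt :=
  {P ∈ rightClosed v i j |
    Real.pi / 3 ≤ EuclideanGeometry.angle (v i) P (v j) ∧ dist (v i) (v j) ≤ dist P (v j)}

/-- `(i,j)` is a feasible pair: the arc `⟨i..j⟩` has an even number of points. -/
def Feasible {n : ℕ} (i j : ZMod n) : Prop := Even (arc i j).card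

/-- `(i,j)` is a diagonal pair (not an edge, not degenerate). -/
def IsDiagPair {n : ℕ} (i j : ZMod n) : Prop := i ≠ j ∧ j ≠ i + 1 ∧ i ≠ j + 1

/-- `(i,j)` is a candidate diagonal: a feasible diagonal that is necessary and
whose turning angle is at most `2π/3`. -/
def Candidate {n : ℕ} (v : ZMod n → Pt) (i j : ZMod n) : Prop :=
  Feasible i j ∧ IsDiagPair i j ∧ Necessary v i j ∧ tau v i j ≤ 2 * Real.pi / 3

end BNC

/-!
Let `e t = v (i + t + 1) - v (i + t)` be the edges of the chain from `v i` to `v j`. Strict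
convexity makes every edge turn left from the previous one, so `e t` is a positive multiple of
`e 0` rotated counterclockwise by the partial turning sum up to `t`, which lies in `[0, τ(i,j)]`.
Since `τ(i,j) < π`, all these edges lie in a convex sector of opening `τ(i,j)`, hence so do their
sums `v k - v i` and `v j - v k`. The angle between those two vectors is therefore at most
`τ(i,j) ≤ 2π/3`, and `∠ v i v k v j` is `π` minus it.
-/

open Real InnerProductGeometry Finset
open scoped EuclideanGeometry RealInnerProductSpace fwdDiff

namespace BNC

lemma ext_coords {u w : Pt} (h0 : u 0 = w 0) (h1 : u 1 = w 1) : u = w := by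
  ext i; fin_cases i <;> assumption

lemma inner_eq_coords (u w : Pt) : ⟪u, w⟫ = u 0 * w 0 + u 1 * w 1 := by
  simp [PiLp.inner_apply, Fin.sum_univ_two]; ring

lemma norm_sq_eq_coords (u : Pt) : ‖u‖ ^ 2 = u 0 ^ 2 + u 1 ^ 2 := by
  rw [← real_inner_self_eq_norm_sq, inner_eq_coords]; ring

lemma cross_add_left (u u' w : Pt) : cross (u + u') w = cross u w + cross u' w := by
  simp only [cross, PiLp.add_apply]; ring

lemma cross_add_right (u w w' : Pt) : cross u (w + w') = cross u w + cross u w' := by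
  simp only [cross, PiLp.add_apply]; ring

lemma cross_smul_left (c : ℝ) (u w : Pt) : cross (c • u) w = c * cross u w := by
  simp only [cross, PiLp.smul_apply, smul_eq_mul]; ring

lemma cross_smul_right (c : ℝ) (u w : Pt) : cross u (c • w) = c * cross u w := by
  simp only [cross, PiLp.smul_apply, smul_eq_mul]; ring

lemma cross_self (u : Pt) : cross u u = 0 := by
  simp only [cross]; ring

lemma ne_zero_left_of_cross_pos {u w : Pt} (h : 0 < cross u w) : u ≠ 0 := by
  rintro rfl; simp [cross] at h

lemma ne_zero_right_of_cross_pos {u w : Pt} (h : 0 < cross u w) : w ≠ 0 := by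
  rintro rfl; simp [cross] at h

lemma inner_self_mul_inner_self_sub_inner_mul_inner (u w : Pt) :
    ⟪u, u⟫ * ⟪w, w⟫ - ⟪u, w⟫ * ⟪u, w⟫ = cross u w ^ 2 := by
  simp only [inner_eq_coords, cross]; ring

lemma sin_angle_mul_norm_mul_norm_eq_abs_cross (u w : Pt) :
    sin (angle u w) * (‖u‖ * ‖w‖) = |cross u w| := by
  rw [sin_angle_mul_norm_mul_norm, inner_self_mul_inner_self_sub_inner_mul_inner,
    Real.sqrt_sq_eq_abs]

lemma angle_pos_of_cross_pos {u w : Pt} (h : 0 < cross u w) : 0 < angle u w := by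
  refine (angle_nonneg u w).lt_of_ne fun h0 => ?_
  have := sin_angle_mul_norm_mul_norm_eq_abs_cross u w
  rw [← h0, sin_zero, zero_mul] at this
  exact h.ne' (abs_eq_zero.mp this.symm)

def rot (θ : ℝ) (u : Pt) : Pt := !₂[cos θ * u 0 - sin θ * u 1, sin θ * u 0 + cos θ * u 1]

@[simp] lemma rot_apply_zero (θ : ℝ) (u : Pt) : rot θ u 0 = cos θ * u 0 - sin θ * u 1 := rfl

@[simp] lemma rot_apply_one (θ : ℝ) (u : Pt) : rot θ u 1 = sin θ * u 0 + cos θ * u 1 := rfl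

lemma rot_zero (u : Pt) : rot 0 u = u := by
  apply ext_coords <;> simp

lemma rot_rot (a b : ℝ) (u : Pt) : rot a (rot b u) = rot (a + b) u := by
  apply ext_coords <;> simp [cos_add, sin_add] <;> ring

lemma rot_smul (θ c : ℝ) (u : Pt) : rot θ (c • u) = c • rot θ u := by
  apply ext_coords <;> simp <;> ring

lemma inner_rot_rot (a b : ℝ) (x : Pt) : ⟪rot a x, rot b x⟫ = cos (b - a) * ‖x‖ ^ 2 := by
  rw [inner_eq_coords, norm_sq_eq_coords]
  simp only [rot_apply_zero, rot_apply_one, cos_sub]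
  ring

lemma cross_rot_rot (a b : ℝ) (x : Pt) : cross (rot a x) (rot b x) = sin (b - a) * ‖x‖ ^ 2 := by
  rw [norm_sq_eq_coords]
  simp only [cross, rot_apply_zero, rot_apply_one, sin_sub]
  ring

lemma norm_rot (θ : ℝ) (x : Pt) : ‖rot θ x‖ = ‖x‖ := by
  have h := inner_rot_rot θ θ x
  rw [sub_self, cos_zero, one_mul, real_inner_self_eq_norm_sq] at h
  exact (sq_eq_sq₀ (norm_nonneg _) (norm_nonneg _)).mp h

lemma cross_rot (θ : ℝ) (x : Pt) : cross x (rot θ x) = sin θ * ‖x‖ ^ 2 := by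
  simpa [rot_zero] using cross_rot_rot 0 θ x

lemma angle_rot_rot {x : Pt} (hx : x ≠ 0) {a b : ℝ} (h : |b - a| ≤ π) :
    angle (rot a x) (rot b x) = |b - a| := by
  refine injOn_cos ⟨angle_nonneg _ _, angle_le_pi _ _⟩ ⟨abs_nonneg _, h⟩ ?_
  have hx' : ‖x‖ ≠ 0 := norm_ne_zero_iff.mpr hx
  rw [cos_angle, inner_rot_rot, norm_rot, norm_rot, cos_abs]
  field_simp

lemma eq_smul_rot_angle {x y : Pt} (hx : x ≠ 0) (h : 0 ≤ cross x y) :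
    y = (‖y‖ / ‖x‖) • rot (angle x y) x := by
  have hcos := cos_angle_mul_norm_mul_norm x y
  have hsin := sin_angle_mul_norm_mul_norm_eq_abs_cross x y
  rw [abs_of_nonneg h] at hsin
  have hx' : ‖x‖ ≠ 0 := norm_ne_zero_iff.mpr hx
  have hxx := norm_sq_eq_coords x
  rw [inner_eq_coords] at hcos
  rw [cross] at hsin
  apply ext_coords <;>
    simp only [PiLp.smul_apply, smul_eq_mul, rot_apply_zero, rot_apply_one, div_mul_eq_mul_div,
      eq_div_iff hx'] <;>
    apply mul_right_cancel₀ hx'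
  · linear_combination y 0 * hxx - x 0 * hcos + x 1 * hsin
  · linear_combination y 1 * hxx - x 1 * hcos - x 0 * hsin

/-- For `0 < τ < π`, the nonnegative multiples of the counterclockwise rotations of `x` through
angles in `[0, τ]`. -/
def sector (x : Pt) (τ : ℝ) : AddSubmonoid Pt where
  carrier := {y | 0 ≤ cross x y ∧ 0 ≤ cross y (rot τ x)}
  add_mem' hy hz :=
    ⟨by rw [cross_add_right]; exact add_nonneg hy.1 hz.1,
      by rw [cross_add_left]; exact add_nonneg hy.2 hz.2⟩
  zero_mem' := by simp [cross]

lemma smul_rot_mem_sector (x : Pt) {c φ τ : ℝ} (hc : 0 ≤ c) (hφ : 0 ≤ φ) (hφτ : φ ≤ τ)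
    (hτ : τ ≤ π) : c • rot φ x ∈ sector x τ := by
  refine ⟨?_, ?_⟩
  · rw [cross_smul_right, cross_rot]
    have := sin_nonneg_of_nonneg_of_le_pi hφ (hφτ.trans hτ)
    positivity
  · rw [cross_smul_left, cross_rot_rot]
    have := sin_nonneg_of_nonneg_of_le_pi (sub_nonneg.mpr hφτ) (by linarith)
    positivity

lemma angle_le_of_mem_sector {x u : Pt} {τ : ℝ} (hx : x ≠ 0) (hτ : 0 < τ)
    (hu : u ∈ sector x τ) (hu0 : u ≠ 0) : angle x u ≤ τ := by
  have hc : 0 < ‖u‖ / ‖x‖ := div_pos (norm_pos_iff.mpr hu0) (norm_pos_iff.mpr hx)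
  have h := hu.2
  rw [eq_smul_rot_angle hx hu.1, cross_smul_left, cross_rot_rot] at h
  have hsin : 0 ≤ sin (τ - angle x u) :=
    nonneg_of_mul_nonneg_left (nonneg_of_mul_nonneg_right h hc) (by positivity)
  by_contra! hlt
  have := sin_neg_of_neg_of_neg_pi_lt (sub_neg.mpr hlt) (by linarith [angle_le_pi x u])
  linarith

lemma angle_le_of_mem_sector_of_mem_sector {x u w : Pt} {τ : ℝ} (hx : x ≠ 0) (hτ : 0 < τ)
    (hτπ : τ < π) (hu : u ∈ sector x τ) (hw : w ∈ sector x τ) (hu0 : u ≠ 0) (hw0 : w ≠ 0) :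
    angle u w ≤ τ := by
  have hφ := angle_le_of_mem_sector hx hτ hu hu0
  have hψ := angle_le_of_mem_sector hx hτ hw hw0
  have hdiff : |angle x w - angle x u| ≤ τ := by
    rw [abs_sub_le_iff]; constructor <;> linarith [angle_nonneg x u, angle_nonneg x w]
  rw [eq_smul_rot_angle hx hu.1, eq_smul_rot_angle hx hw.1,
    angle_smul_left_of_pos _ _ (by positivity), angle_smul_right_of_pos _ _ (by positivity),
    angle_rot_rot hx (hdiff.trans hτπ.le)]
  exact hdiff

def turning (e : ℕ → Pt) (N : ℕ) : ℝ := ∑ t ∈ range N, angle (e t) (e (t + 1))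

lemma turning_succ (e : ℕ → Pt) (N : ℕ) :
    turning e (N + 1) = turning e N + angle (e N) (e (N + 1)) :=
  sum_range_succ _ _

lemma turning_nonneg (e : ℕ → Pt) (N : ℕ) : 0 ≤ turning e N :=
  sum_nonneg fun _ _ => angle_nonneg _ _

lemma monotone_turning (e : ℕ → Pt) : Monotone (turning e) :=
  monotone_nat_of_le_succ fun N => by
    rw [turning_succ]; exact le_add_of_nonneg_right (angle_nonneg _ _)

section LeftTurns

variable {e : ℕ → Pt}

lemma turning_pos (he : ∀ t, 0 < cross (e t) (e (t + 1))) {N : ℕ} (hN : 0 < N) :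
    0 < turning e N := by
  have h1 : turning e 1 = angle (e 0) (e 1) := by simp [turning]
  exact (h1 ▸ angle_pos_of_cross_pos (he 0)).trans_le (monotone_turning e hN)

lemma exists_eq_smul_rot_turning (he : ∀ t, 0 < cross (e t) (e (t + 1))) (t : ℕ) :
    ∃ c : ℝ, 0 < c ∧ e t = c • rot (turning e t) (e 0) := by
  induction t with
  | zero => exact ⟨1, one_pos, by simp [turning, rot_zero]⟩
  | succ t ih =>
    obtain ⟨c, hc, hct⟩ := ih
    have hnext := eq_smul_rot_angle (ne_zero_left_of_cross_pos (he t)) (he t).le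
    set r := ‖e (t + 1)‖ / ‖e t‖
    set α := angle (e t) (e (t + 1))
    have hr : 0 < r := div_pos (norm_pos_iff.mpr (ne_zero_right_of_cross_pos (he t)))
      (norm_pos_iff.mpr (ne_zero_left_of_cross_pos (he t)))
    refine ⟨r * c, mul_pos hr hc, ?_⟩
    rw [hnext, hct, rot_smul, rot_rot, smul_smul, turning_succ, add_comm α]

lemma mem_sector_turning (he : ∀ t, 0 < cross (e t) (e (t + 1))) {N t : ℕ}
    (hN : turning e N ≤ π) (ht : t ≤ N) : e t ∈ sector (e 0) (turning e N) := by
  obtain ⟨c, hc, hct⟩ := exists_eq_smul_rot_turning he t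
  rw [hct]
  exact smul_rot_mem_sector _ hc.le (turning_nonneg e t) (monotone_turning e ht) hN

end LeftTurns

theorem pi_sub_turning_le_angle {p : ℕ → Pt}
    (hp : ∀ t, 0 < cross (Δ_[1] p t) (Δ_[1] p (t + 1))) {N a b c : ℕ}
    (hN : turning (Δ_[1] p) N < π) (hab : a ≤ b) (hbc : b ≤ c) (hc : c ≤ N + 1)
    (hpab : p a ≠ p b) (hpbc : p b ≠ p c) :
    π - turning (Δ_[1] p) N ≤ ∠ (p a) (p b) (p c) := by
  have hab' : a ≠ b := by rintro rfl; exact hpab rfl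
  have hbc' : b ≠ c := by rintro rfl; exact hpbc rfl
  have hτ := turning_pos hp (by omega : 0 < N)
  have hsum_mem : ∀ {a b}, a ≤ b → b ≤ N + 1 →
      p b - p a ∈ sector (Δ_[1] p 0) (turning (Δ_[1] p) N) := fun {a b} hab hb => by
    rw [← sum_Ico_sub p hab]
    exact sum_mem fun t ht => mem_sector_turning hp hN.le (by rw [mem_Ico] at ht; omega)
  have := angle_le_of_mem_sector_of_mem_sector (ne_zero_left_of_cross_pos (hp 0)) hτ hN
    (hsum_mem hab (by omega)) (hsum_mem hbc hc) (sub_ne_zero.mpr hpab.symm)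
    (sub_ne_zero.mpr hpbc.symm)
  rw [EuclideanGeometry.angle, vsub_eq_sub, vsub_eq_sub, ← neg_sub (p b) (p a), angle_neg_left]
  linarith

section Polygon

variable {n : ℕ} {v : ZMod n → Pt}

lemma fwdDiff_comp_add_natCast (v : ZMod n → Pt) (i : ZMod n) (t : ℕ) :
    Δ_[1] (fun t : ℕ => v (i + t)) t = v (i + t + 1) - v (i + t) := by
  simp [fwdDiff, add_assoc]

lemma ConvexCCW.cross_pos (hv : ConvexCCW v) (hn : 3 ≤ n) (s : ZMod n) :
    0 < cross (v (s + 1) - v s) (v (s + 1 + 1) - v (s + 1)) := by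
  have h1 : (1 : ZMod n) ≠ 0 := by
    have : Fact (1 < n) := ⟨by omega⟩
    exact one_ne_zero
  have h2 : (2 : ZMod n) ≠ 0 := fun h => by
    have := Nat.le_of_dvd two_pos ((ZMod.natCast_eq_zero_iff 2 n).mp (by exact_mod_cast h))
    omega
  have h := hv s (s + 1 + 1) (fun h => h2 (by linear_combination h))
    (fun h => h1 (by linear_combination h))
  rwa [← sub_add_sub_cancel (v (s + 1 + 1)) (v (s + 1)), cross_add_right, cross_self,
    add_zero] at h

lemma ConvexCCW.cross_fwdDiff_pos (hv : ConvexCCW v) (hn : 3 ≤ n) (i : ZMod n) (t : ℕ) :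
    0 < cross (Δ_[1] (fun t : ℕ => v (i + t)) t) (Δ_[1] (fun t : ℕ => v (i + t)) (t + 1)) := by
  rw [fwdDiff_comp_add_natCast, fwdDiff_comp_add_natCast, Nat.cast_succ, ← add_assoc]
  exact hv.cross_pos hn _

lemma tau_eq_turning [NeZero n] (v : ZMod n → Pt) (i j : ZMod n) :
    tau v i j = turning (Δ_[1] fun t : ℕ => v (i + t)) ((j - 1 - (i + 1)).val + 1) := by
  have hinj : Set.InjOn (fun t : ℕ => i + 1 + (t : ZMod n))
      (range ((j - 1 - (i + 1)).val + 1)) := by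
    intro a ha b hb hab
    have := ZMod.val_lt (j - 1 - (i + 1))
    simp only [coe_range, Set.mem_Iio] at ha hb
    have hab : (a : ZMod n) = b := add_left_cancel hab
    rwa [ZMod.natCast_eq_natCast_iff', Nat.mod_eq_of_lt (by omega),
      Nat.mod_eq_of_lt (by omega)] at hab
  rw [tau, arc, sum_image hinj, turning]
  refine sum_congr rfl fun t _ => ?_
  rw [angle_comm, fwdDiff_comp_add_natCast, fwdDiff_comp_add_natCast]
  push_cast
  ring_nf

end Polygon

end BNC

theorem stmt12_general (n : ℕ) [NeZero n] (hn : 4 ≤ n)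
    (v : ZMod n → BNC.Pt) (hv : BNC.ConvexCCW v)
    (i j : ZMod n) (htau : BNC.tau v i j ≤ 2 * Real.pi / 3) :
    ∀ k ∈ BNC.arc (i + 1) (j - 1),
      Real.pi / 3 ≤ EuclideanGeometry.angle (v i) (v k) (v j) := by
  intro k hk
  obtain ⟨s, hs, rfl⟩ := mem_image.mp hk
  rw [mem_range] at hs
  set m := (j - 1 - (i + 1)).val with hm
  set p : ℕ → BNC.Pt := fun t => v (i + t)
  have hi : v i = p 0 := by simp [p]
  have hk : v (i + 1 + s) = p (s + 1) := by simp only [p]; push_cast; ring_nf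
  have hj : v j = p (m + 2) := by
    simp only [p]; push_cast; rw [hm, ZMod.natCast_val, ZMod.cast_id]; ring_nf
  rw [hi, hk, hj]
  rcases eq_or_ne (p 0) (p (s + 1)) with h | hik
  · rw [h, EuclideanGeometry.angle_self_left]; linarith [pi_pos]
  rcases eq_or_ne (p (s + 1)) (p (m + 2)) with h | hkj
  · rw [h, EuclideanGeometry.angle_self_right]; linarith [pi_pos]
  rw [BNC.tau_eq_turning] at htau
  have := BNC.pi_sub_turning_le_angle (hv.cross_fwdDiff_pos (by omega) i)
    (htau.trans_lt (by linarith [pi_pos])) (Nat.zero_le _) (by omega : s + 1 ≤ m + 2) le_rfl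
    hik hkj
  exact le_trans (by linarith) this

/-- If `τ(i,j) ≤ 2π/3` then every point `v k` with `k ∈ ⟨i+1..j−1⟩` satisfies
`∠ v i, v k, v j ≥ π/3`. -/
theorem stmt12 (n : ℕ) [NeZero n] (hn : 4 ≤ n) (hEven : Even n)
    (v : ZMod n → BNC.Pt) (hv : BNC.ConvexCCW v)
    (i j : ZMod n) (htau : BNC.tau v i j ≤ 2 * Real.pi / 3) :
    ∀ k ∈ BNC.arc (i + 1) (j - 1),
      Real.pi / 3 ≤ EuclideanGeometry.angle (v i) (v k) (v j) :=
  stmt12_general n hn v hv i j htau
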